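/- Let K ⊂ ℝⁿ be a nonempty compact set with K = S₀(K) ∪ … ∪ S_k(K) where each S_i is a homothety with ratio in (0,1) and the sets S_i(K) are pairwise disjoint (strong separation). Then the set of unit direction vectors { (x−y)/‖x−y‖ : x, y ∈ K, x ≠ y } is a closed (hence compact) subset of the unit sphere S^{n−1}. -/

import Mathlib

/-!
Let `c > 0` be the smallest distance between two distinct pieces `S i '' K`. A pair of points of
`K` lying in one piece is the image under `S i` of a pair with the same direction and a distance
larger by the factor `1 / r i`; since `K` is bounded this can be iterated only finitely often, so
every direction is realized by a pair at distance at least `c`. Those directions form the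
continuous image of a compact set.
-/

/-- A homothety of ℝⁿ with center `c` and ratio `r`. -/
def IsHomothety {n : ℕ} (S : EuclideanSpace ℝ (Fin n) → EuclideanSpace ℝ (Fin n)) (r : ℝ) : Prop :=
  ∃ c : EuclideanSpace ℝ (Fin n), ∀ x, S x = c + r • (x - c)

open Function Metric Set Filter Topology

theorem exists_pos_le_dist_of_pairwise_disjoint {X ι : Type*} [MetricSpace X] [Finite ι]
    {A : ι → Set X} (hA : ∀ i, IsCompact (A i)) (hdisj : Pairwise (Disjoint on A)) :
    ∃ c > 0, ∀ i j, i ≠ j → ∀ x ∈ A i, ∀ y ∈ A j, c ≤ dist x y := by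
  set P := ⋃ p ∈ {p : ι × ι | p.1 ≠ p.2}, A p.1 ×ˢ A p.2
  have hP : IsCompact P := (Set.toFinite _).isCompact_biUnion fun p _ => (hA p.1).prod (hA p.2)
  have hpos : ∀ q ∈ P, 0 < dist q.1 q.2 := by
    simp only [P, mem_iUnion, mem_prod, mem_ofPred_eq]
    rintro q ⟨p, hp, hq1, hq2⟩
    exact dist_pos.2 fun h => (hdisj hp).ne_of_mem hq1 hq2 h
  obtain ⟨c, hc, hcP⟩ := hP.exists_forall_le' continuous_dist.continuousOn hpos
  refine ⟨c, hc, fun i j hij x hx y hy => hcP (x, y) ?_⟩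
  exact mem_biUnion (x := (i, j)) hij ⟨hx, hy⟩

theorem exists_common_piece_of_dist_lt {X ι : Type*} [MetricSpace X] {K : Set X}
    {S : ι → X → X} (hunion : K = ⋃ i, S i '' K) {c : ℝ}
    (hsep : ∀ i j, i ≠ j → ∀ x ∈ S i '' K, ∀ y ∈ S j '' K, c ≤ dist x y)
    {x y : X} (hx : x ∈ K) (hy : y ∈ K) (hxy : dist x y < c) :
    ∃ i, ∃ a ∈ K, ∃ b ∈ K, S i a = x ∧ S i b = y := by
  obtain ⟨i, a, ha, rfl⟩ : ∃ i, ∃ a ∈ K, S i a = x := by simpa using hunion.subset hx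
  obtain ⟨j, b, hb, rfl⟩ : ∃ j, ∃ b ∈ K, S j b = y := by simpa using hunion.subset hy
  obtain rfl : i = j := by
    by_contra hij
    exact (hsep i j hij _ ⟨a, ha, rfl⟩ _ ⟨b, hb, rfl⟩).not_gt hxy
  exact ⟨i, a, ha, b, hb, rfl, rfl⟩

theorem Bornology.IsBounded.exists_le_dist_of_expanding {X β : Type*} [MetricSpace X]
    {K : Set X} (hK : IsBounded K) {f : X → X → β} {c ρ : ℝ}
    (hρ0 : 0 ≤ ρ) (hρ1 : ρ < 1)
    (hexpand : ∀ x ∈ K, ∀ y ∈ K, dist x y < c →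
      ∃ a ∈ K, ∃ b ∈ K, dist x y ≤ ρ * dist a b ∧ f a b = f x y)
    {x y : X} (hx : x ∈ K) (hy : y ∈ K) (hxy : x ≠ y) :
    ∃ a ∈ K, ∃ b ∈ K, c ≤ dist a b ∧ f a b = f x y := by
  suffices h : ∀ m : ℕ, ∀ x ∈ K, ∀ y ∈ K, diam K * ρ ^ m < dist x y →
      ∃ a ∈ K, ∃ b ∈ K, c ≤ dist a b ∧ f a b = f x y by
    have hlim : Tendsto (fun m : ℕ => diam K * ρ ^ m) atTop (𝓝 0) := by
      simpa using (tendsto_pow_atTop_nhds_zero_of_lt_one hρ0 hρ1).const_mul (diam K)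
    obtain ⟨m, hm⟩ := (hlim.eventually (gt_mem_nhds (dist_pos.2 hxy))).exists
    exact h m x hx y hy hm
  intro m
  induction m with
  | zero =>
    intro x hx y hy hlt
    exact absurd (dist_le_diam_of_mem hK hx hy) (by simpa using hlt)
  | succ m ih =>
    intro x hx y hy hlt
    by_cases hc : c ≤ dist x y
    · exact ⟨x, hx, y, hy, hc, rfl⟩
    obtain ⟨a, ha, b, hb, hab, hfab⟩ := hexpand x hx y hy (not_le.1 hc)
    have : diam K * ρ ^ m < dist a b := by
      refine lt_of_mul_lt_mul_left ?_ hρ0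
      calc ρ * (diam K * ρ ^ m) = diam K * ρ ^ (m + 1) := by ring
        _ < dist x y := hlt
        _ ≤ ρ * dist a b := hab
    obtain ⟨a', ha', b', hb', hc', hf'⟩ := ih a ha b hb this
    exact ⟨a', ha', b', hb', hc', hf'.trans hfab⟩

theorem continuousAt_normalize {E : Type*} [NormedAddCommGroup E] [NormedSpace ℝ E] {v : E}
    (hv : v ≠ 0) : ContinuousAt NormedSpace.normalize v :=
  (continuous_norm.continuousAt.inv₀ (norm_ne_zero_iff.2 hv)).smul continuousAt_id

theorem IsCompact.image_normalize_sub {E : Type*} [NormedAddCommGroup E] [NormedSpace ℝ E]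
    {K : Set E} (hK : IsCompact K) {c : ℝ} (hc : 0 < c) :
    IsCompact ((fun p : E × E => NormedSpace.normalize (p.1 - p.2)) ''
      {p ∈ K ×ˢ K | c ≤ dist p.1 p.2}) := by
  refine ((hK.prod hK).inter_right (isClosed_le continuous_const continuous_dist))
    |>.image_of_continuousOn fun p hp => ContinuousAt.continuousWithinAt ?_
  refine (continuousAt_normalize ?_).comp (continuous_fst.sub continuous_snd).continuousAt
  rw [sub_ne_zero, ← dist_pos]
  exact hc.trans_le hp.2

namespace IsHomothety

variable {n : ℕ} {S : EuclideanSpace ℝ (Fin n) → EuclideanSpace ℝ (Fin n)} {r : ℝ}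

theorem sub_eq (h : IsHomothety S r) (a b : EuclideanSpace ℝ (Fin n)) :
    S a - S b = r • (a - b) := by
  obtain ⟨c, hc⟩ := h
  rw [hc a, hc b]
  module

theorem dist_eq (h : IsHomothety S r) (a b : EuclideanSpace ℝ (Fin n)) :
    dist (S a) (S b) = |r| * dist a b := by
  rw [dist_eq_norm, dist_eq_norm, h.sub_eq, norm_smul, Real.norm_eq_abs]

theorem normalize_sub (h : IsHomothety S r) (hr : 0 < r) (a b : EuclideanSpace ℝ (Fin n)) :
    NormedSpace.normalize (S a - S b) = NormedSpace.normalize (a - b) := by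
  rw [h.sub_eq, NormedSpace.normalize_smul_of_pos hr]

theorem continuous (h : IsHomothety S r) : Continuous S := by
  obtain ⟨c, hc⟩ := h
  rw [funext hc]
  fun_prop

end IsHomothety

theorem stmt16_general (n k : ℕ) (K : Set (EuclideanSpace ℝ (Fin n)))
    (hK : IsCompact K)
    (S : Fin (k + 1) → EuclideanSpace ℝ (Fin n) → EuclideanSpace ℝ (Fin n))
    (r : Fin (k + 1) → ℝ) (hhom : ∀ i, IsHomothety (S i) (r i))
    (hr : ∀ i, r i ∈ Set.Ioo (0 : ℝ) 1)
    (hunion : K = ⋃ i, S i '' K)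
    (hdisj : ∀ i j, i ≠ j → Disjoint (S i '' K) (S j '' K)) :
    IsClosed {d : EuclideanSpace ℝ (Fin n) |
      ∃ x ∈ K, ∃ y ∈ K, x ≠ y ∧ d = ‖x - y‖⁻¹ • (x - y)} := by
  obtain ⟨c, hc, hsep⟩ := exists_pos_le_dist_of_pairwise_disjoint
    (fun i => hK.image (hhom i).continuous) hdisj
  obtain ⟨i₀, hi₀⟩ := Finite.exists_max r
  have hexpand : ∀ x ∈ K, ∀ y ∈ K, dist x y < c → ∃ a ∈ K, ∃ b ∈ K,
      dist x y ≤ r i₀ * dist a b ∧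
        NormedSpace.normalize (a - b) = NormedSpace.normalize (x - y) := by
    intro x hx y hy hxy
    obtain ⟨i, a, ha, b, hb, rfl, rfl⟩ := exists_common_piece_of_dist_lt hunion hsep hx hy hxy
    refine ⟨a, ha, b, hb, ?_, ((hhom i).normalize_sub (hr i).1 a b).symm⟩
    rw [(hhom i).dist_eq, abs_of_pos (hr i).1]
    exact mul_le_mul_of_nonneg_right (hi₀ i) dist_nonneg
  refine (congrArg IsClosed ?_).mpr (hK.image_normalize_sub hc).isClosed
  ext d
  constructor
  · rintro ⟨x, hx, y, hy, hxy, rfl⟩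
    obtain ⟨a, ha, b, hb, hab, hdir⟩ := hK.isBounded.exists_le_dist_of_expanding
      (hr i₀).1.le (hr i₀).2 hexpand hx hy hxy
    exact ⟨(a, b), ⟨⟨ha, hb⟩, hab⟩, hdir⟩
  · rintro ⟨⟨x, y⟩, ⟨⟨hx, hy⟩, hxy⟩, rfl⟩
    exact ⟨x, hx, y, hy, dist_pos.1 (hc.trans_le hxy), rfl⟩

theorem stmt16 (n k : ℕ) (K : Set (EuclideanSpace ℝ (Fin n)))
    (hne : K.Nonempty) (hK : IsCompact K)
    (S : Fin (k + 1) → EuclideanSpace ℝ (Fin n) → EuclideanSpace ℝ (Fin n))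
    (r : Fin (k + 1) → ℝ) (hhom : ∀ i, IsHomothety (S i) (r i))
    (hr : ∀ i, r i ∈ Set.Ioo (0 : ℝ) 1)
    (hunion : K = ⋃ i, S i '' K)
    (hdisj : ∀ i j, i ≠ j → Disjoint (S i '' K) (S j '' K)) :
    IsClosed {d : EuclideanSpace ℝ (Fin n) |
      ∃ x ∈ K, ∃ y ∈ K, x ≠ y ∧ d = ‖x - y‖⁻¹ • (x - y)} :=
  stmt16_general n k K hK S r hhom hr hunion hdisj
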